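/- arXiv:2512.10993 — 2 statements merged into one kernel-verified Lean document; each statement's English description precedes it below -/
import Mathlib

section
/- Let σ : ℝ³ → Sym(3,ℝ) be a C¹ symmetric-tensor field, vanishing outside a compact set, with zero diagonal components (σ₁₁ = σ₂₂ = σ₃₃ = 0) and divergence-free (Σᵢ ∂ᵢσᵢⱼ = 0 for each j). Then σ = 0 identically. -/
/-!
With zero diagonal, the equilibrium equations for `a = σ 1 2`, `b = σ 0 2`, `c = σ 0 1` are the
cyclic system `∂₁a = -∂₀b`, `∂₂b = -∂₁c`, `∂₀c = -∂₂a`. For `C²` fields, going once around the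
cycle while commuting partial derivatives gives `∂₁∂₂a = -∂₁∂₂a`, so `∂₁∂₂a = 0`; a compactly
supported function with a vanishing partial derivative is constant along coordinate lines, hence
zero, so `a = 0`, and likewise `b` and `c`. `C¹` fields reduce to this case by mollification,
which commutes with partial derivatives and preserves the system.
-/

noncomputable def pd (i : Fin 3) (f : (Fin 3 → ℝ) → ℝ) : (Fin 3 → ℝ) → ℝ :=
  fun x => fderiv ℝ f x (Pi.single i 1)

open Filter Topology Bornology MeasureTheory
open scoped Convolution

theorem tendsto_add_smul_atTop_cobounded {E : Type*} [NormedAddCommGroup E] [NormedSpace ℝ E]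
    (x : E) {v : E} (hv : v ≠ 0) :
    Tendsto (fun t : ℝ => x + t • v) atTop (cobounded E) := by
  refine tendsto_norm_atTop_iff_cobounded.mp (tendsto_atTop_mono (fun t => ?_)
    (tendsto_atTop_add_const_right _ (-‖x‖) (tendsto_id.atTop_mul_const (norm_pos_iff.2 hv))))
  calc id t * ‖v‖ + -‖x‖ ≤ ‖t • v‖ - ‖x‖ := by
        rw [id, norm_smul, ← sub_eq_add_neg]; gcongr; exact Real.le_norm_self t
    _ ≤ ‖x + t • v‖ := by
        simpa [add_comm] using norm_sub_norm_le (t • v) (-x)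

theorem HasCompactSupport.eq_zero_of_fderiv_apply_eq_zero {E F : Type*} [NormedAddCommGroup E]
    [NormedSpace ℝ E] [NormedAddCommGroup F] [NormedSpace ℝ F] {f : E → F}
    (hf : Differentiable ℝ f) (hsupp : HasCompactSupport f) {v : E} (hv : v ≠ 0)
    (hfv : ∀ x, fderiv ℝ f x v = 0) : f = 0 := by
  funext x
  have hline (t : ℝ) : HasDerivAt (fun t : ℝ => f (x + t • v)) (fderiv ℝ f (x + t • v) v) t :=
    (hf _).hasFDerivAt.comp_hasDerivAt t
      ((((hasDerivAt_id t).smul_const v).const_add x).congr_deriv (one_smul ℝ v))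
  have hconst (t : ℝ) : f (x + t • v) = f x := by
    simpa using is_const_of_deriv_eq_zero (fun t => (hline t).differentiableAt)
      (fun t => by rw [(hline t).deriv, hfv]) t 0
  have hlim := hsupp.is_zero_at_infty.comp
    ((tendsto_add_smul_atTop_cobounded x hv).mono_right Metric.cobounded_le_cocompact)
  exact tendsto_nhds_unique (tendsto_const_nhds.congr fun t => (hconst t).symm) hlim

theorem fderiv_fderiv_apply_comm {E F : Type*} [NormedAddCommGroup E] [NormedSpace ℝ E]
    [NormedAddCommGroup F] [NormedSpace ℝ F] {f : E → F} (hf : ContDiff ℝ 2 f) (x v w : E) :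
    fderiv ℝ (fun y => fderiv ℝ f y v) x w = fderiv ℝ (fun y => fderiv ℝ f y w) x v := by
  have hdf : Differentiable ℝ (fderiv ℝ f) :=
    (hf.fderiv_right (m := 1) le_rfl).differentiable one_ne_zero
  rw [fderiv_clm_apply (hdf x) (differentiableAt_const v),
    fderiv_clm_apply (hdf x) (differentiableAt_const w)]
  simpa using (hf.contDiffAt.isSymmSndFDerivAt (by simp)).eq w v

theorem convolution_neg {𝕜 G E E' F : Type*} [NontriviallyNormedField 𝕜] [NormedAddCommGroup E]
    [NormedAddCommGroup E'] [NormedAddCommGroup F] [NormedSpace 𝕜 E] [NormedSpace 𝕜 E']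
    [NormedSpace 𝕜 F] [NormedSpace ℝ F] [MeasurableSpace G] [Sub G] {f : G → E} {g : G → E'}
    {L : E →L[𝕜] E' →L[𝕜] F} {μ : Measure G} :
    f ⋆[L, μ] (-g) = -(f ⋆[L, μ] g) := by
  ext x
  simp [convolution_def, integral_neg]

section PartialDerivatives

variable {f g : (Fin 3 → ℝ) → ℝ}

theorem pd_neg (i : Fin 3) : pd i (-f) = -pd i f := by
  funext x
  simp [pd, fderiv_neg]

theorem pd_zero (i : Fin 3) : pd i 0 = 0 := by
  funext x
  simp [pd]

theorem pd_pd_comm (hf : ContDiff ℝ 2 f) (i j : Fin 3) : pd i (pd j f) = pd j (pd i f) :=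
  funext fun x => fderiv_fderiv_apply_comm hf x _ _

theorem ContDiff.pd {m n : WithTop ℕ∞} (hf : ContDiff ℝ n f) (hmn : m + 1 ≤ n) (i : Fin 3) :
    ContDiff ℝ m (pd i f) :=
  (hf.fderiv_right hmn).clm_apply contDiff_const

theorem HasCompactSupport.pd (hf : HasCompactSupport f) (i : Fin 3) :
    HasCompactSupport (pd i f) :=
  hf.fderiv (𝕜 := ℝ) |>.comp_left (g := fun L : (Fin 3 → ℝ) →L[ℝ] ℝ => L (Pi.single i 1)) rfl

theorem pd_convolution {ρ : (Fin 3 → ℝ) → ℝ} (hρ : LocallyIntegrable ρ) (hg : ContDiff ℝ 1 g)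
    (hcg : HasCompactSupport g) (i : Fin 3) : pd i (ρ ⋆ g) = ρ ⋆ pd i g := by
  funext x
  rw [pd, (hcg.hasFDerivAt_convolution_right _ hρ hg x).fderiv,
    convolution_precompR_apply _ hρ (hcg.fderiv (𝕜 := ℝ)) (hg.continuous_fderiv one_ne_zero)]
  rfl

end PartialDerivatives

theorem eq_zero_of_pd_eq_zero {f : (Fin 3 → ℝ) → ℝ} (hf : Differentiable ℝ f)
    (hsupp : HasCompactSupport f) {i : Fin 3} (hi : pd i f = 0) : f = 0 :=
  hsupp.eq_zero_of_fderiv_apply_eq_zero hf (Pi.single_ne_zero_iff.2 one_ne_zero)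
    (congrFun hi)

section CyclicSystem

variable {a b c : (Fin 3 → ℝ) → ℝ} {x y z : Fin 3}

theorem pd_pd_eq_zero_of_cyclic (ha : ContDiff ℝ 2 a) (hb : ContDiff ℝ 2 b)
    (hc : ContDiff ℝ 2 c) (hab : pd y a = -pd x b) (hbc : pd z b = -pd y c)
    (hca : pd x c = -pd z a) : pd y (pd z a) = 0 := by
  refine self_eq_neg.mp ?_
  calc pd y (pd z a) = pd z (pd y a) := pd_pd_comm ha y z
    _ = -pd x (pd z b) := by rw [hab, pd_neg, pd_pd_comm hb]
    _ = pd y (pd x c) := by rw [hbc, pd_neg, neg_neg, pd_pd_comm hc]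
    _ = -pd y (pd z a) := by rw [hca, pd_neg]

theorem eq_zero_of_cyclic_of_contDiff_two (ha : ContDiff ℝ 2 a) (hb : ContDiff ℝ 2 b)
    (hc : ContDiff ℝ 2 c) (hsupp : HasCompactSupport a) (hab : pd y a = -pd x b)
    (hbc : pd z b = -pd y c) (hca : pd x c = -pd z a) : a = 0 :=
  eq_zero_of_pd_eq_zero (ha.differentiable two_ne_zero) hsupp <|
    eq_zero_of_pd_eq_zero ((ha.pd (m := 1) le_rfl z).differentiable one_ne_zero) (hsupp.pd z)
      (pd_pd_eq_zero_of_cyclic ha hb hc hab hbc hca)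

end CyclicSystem

theorem pd_convolution_eq_neg_of_pd_eq_neg {ρ f g : (Fin 3 → ℝ) → ℝ} (hρ : LocallyIntegrable ρ)
    (hf : ContDiff ℝ 1 f) (hg : ContDiff ℝ 1 g) (hcf : HasCompactSupport f)
    (hcg : HasCompactSupport g) {i j : Fin 3} (h : pd i f = -pd j g) :
    pd i (ρ ⋆ f) = -pd j (ρ ⋆ g) := by
  rw [pd_convolution hρ hf hcf, pd_convolution hρ hg hcg, h, convolution_neg]

theorem Continuous.eq_zero_of_forall_normed_convolution_eq_zero {G E : Type*}
    [NormedAddCommGroup G] [NormedSpace ℝ G] [FiniteDimensional ℝ G] [HasContDiffBump G]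
    [MeasurableSpace G] [BorelSpace G] {μ : Measure G} [μ.IsAddHaarMeasure]
    [NormedAddCommGroup E] [NormedSpace ℝ E] [CompleteSpace E] {g : G → E}
    (hg : Continuous g)
    (h : ∀ φ : ContDiffBump (0 : G), φ.normed μ ⋆[ContinuousLinearMap.lsmul ℝ ℝ, μ] g = 0) :
    g = 0 := by
  funext x
  let φ (n : ℕ) : ContDiffBump (0 : G) :=
    ⟨(n + 1 : ℝ)⁻¹, 2 * (n + 1 : ℝ)⁻¹, by positivity,
      by linarith [(by positivity : (0 : ℝ) < (n + 1 : ℝ)⁻¹)]⟩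
  have hφ : Tendsto (fun n => (φ n).rOut) atTop (𝓝 0) := by
    simpa using (tendsto_one_div_add_atTop_nhds_zero_nat (𝕜 := ℝ)).const_mul 2
  have hlim := ContDiffBump.convolution_tendsto_right_of_continuous (μ := μ) hφ hg x
  simp only [h, Pi.zero_apply] at hlim
  exact tendsto_nhds_unique hlim tendsto_const_nhds

theorem eq_zero_of_cyclic {a b c : (Fin 3 → ℝ) → ℝ} {x y z : Fin 3} (ha : ContDiff ℝ 1 a)
    (hb : ContDiff ℝ 1 b) (hc : ContDiff ℝ 1 c) (hsa : HasCompactSupport a)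
    (hsb : HasCompactSupport b) (hsc : HasCompactSupport c) (hab : pd y a = -pd x b)
    (hbc : pd z b = -pd y c) (hca : pd x c = -pd z a) : a = 0 := by
  refine ha.continuous.eq_zero_of_forall_normed_convolution_eq_zero (μ := volume) fun φ => ?_
  have hρ : LocallyIntegrable (φ.normed volume) := φ.integrable_normed.locallyIntegrable
  have hsmooth {f : (Fin 3 → ℝ) → ℝ} (hf : ContDiff ℝ 1 f) :
      ContDiff ℝ 2 (φ.normed volume ⋆ f) :=
    φ.hasCompactSupport_normed.contDiff_convolution_left _ φ.contDiff_normed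
      hf.continuous.locallyIntegrable
  exact eq_zero_of_cyclic_of_contDiff_two (hsmooth ha) (hsmooth hb) (hsmooth hc)
    (φ.hasCompactSupport_normed.convolution _ hsa)
    (pd_convolution_eq_neg_of_pd_eq_neg hρ ha hb hsa hsb hab)
    (pd_convolution_eq_neg_of_pd_eq_neg hρ hb hc hsb hsc hbc)
    (pd_convolution_eq_neg_of_pd_eq_neg hρ hc ha hsc hsa hca)

theorem pd_eq_neg_pd_of_sum_pd_eq_zero {τ : Fin 3 → (Fin 3 → ℝ) → ℝ} {j p q : Fin 3}
    (hjp : j ≠ p) (hjq : j ≠ q) (hpq : p ≠ q) (hτ : τ j = 0)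
    (h : ∀ x, ∑ i, pd i (τ i) x = 0) : pd p (τ p) = -pd q (τ q) := by
  have huniv : (Finset.univ : Finset (Fin 3)) = {j, p, q} := by
    clear hτ h; revert j p q; decide
  funext x
  have hx := h x
  rw [huniv, Finset.sum_insert (by simp [hjp, hjq]), Finset.sum_pair hpq, hτ, pd_zero] at hx
  simp only [Pi.zero_apply, zero_add, Pi.neg_apply] at hx ⊢
  linarith

theorem stmt8 (σ : Fin 3 → Fin 3 → (Fin 3 → ℝ) → ℝ)
    (hsym : ∀ i j, σ i j = σ j i)
    (hsmooth : ∀ i j, ContDiff ℝ 1 (σ i j))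
    (hsupp : ∀ i j, HasCompactSupport (σ i j))
    (hdiag : ∀ i, ∀ x, σ i i x = 0)
    (hdiv : ∀ j : Fin 3, ∀ x, ∑ i : Fin 3, pd i (σ i j) x = 0) :
    ∀ i j, ∀ x, σ i j x = 0 := by
  have hcol (j p q : Fin 3) (hjp : j ≠ p) (hjq : j ≠ q) (hpq : p ≠ q) :
      pd p (σ p j) = -pd q (σ q j) :=
    pd_eq_neg_pd_of_sum_pd_eq_zero (τ := fun i => σ i j) hjp hjq hpq (funext (hdiag j)) (hdiv j)
  have h12 : pd 1 (σ 1 2) = -pd 0 (σ 0 2) := hcol 2 1 0 (by decide) (by decide) (by decide)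
  have h20 : pd 2 (σ 0 2) = -pd 1 (σ 0 1) := by
    simpa only [hsym 2 0, hsym 1 0] using hcol 0 2 1 (by decide) (by decide) (by decide)
  have h01 : pd 0 (σ 0 1) = -pd 2 (σ 1 2) := by
    simpa only [hsym 2 1] using hcol 1 0 2 (by decide) (by decide) (by decide)
  have ha : σ 1 2 = 0 := eq_zero_of_cyclic (hsmooth _ _) (hsmooth _ _) (hsmooth _ _)
    (hsupp _ _) (hsupp _ _) (hsupp _ _) h12 h20 h01
  have hb : σ 0 2 = 0 := eq_zero_of_cyclic (hsmooth _ _) (hsmooth _ _) (hsmooth _ _)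
    (hsupp _ _) (hsupp _ _) (hsupp _ _) h20 h01 h12
  have hc : σ 0 1 = 0 := eq_zero_of_cyclic (hsmooth _ _) (hsmooth _ _) (hsmooth _ _)
    (hsupp _ _) (hsupp _ _) (hsupp _ _) h01 h12 h20
  intro i j x
  fin_cases i <;> fin_cases j <;> simp [hdiag, ha, hb, hc, hsym 1 0, hsym 2 0, hsym 2 1]
end

section
/- Let ε* be a symmetric 3×3 tensor field on ℝ³ with C³ components. Then there exists a C² vector field u : ℝ³ → ℝ³ such that ∂₁u₂ + ∂₂u₁ = 2ε*₁₂, ∂₁u₃ + ∂₃u₁ = 2ε*₁₃, and ∂₂u₃ + ∂₃u₂ = 2ε*₂₃; i.e., the off-diagonal components of the symmetric gradient ∇ₛu equal the off-diagonal components of ε*. -/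
open MeasureTheory Function

theorem fderiv_apply_eq_of_hasDerivAt_line {E F : Type*} [NormedAddCommGroup E]
    [NormedSpace ℝ E] [NormedAddCommGroup F] [NormedSpace ℝ F] {f : E → F} {x v : E} {d : F}
    (hf : DifferentiableAt ℝ f x) (h : HasDerivAt (fun t : ℝ => f (x + t • v)) d 0) :
    fderiv ℝ f x v = d :=
  hf.lineDeriv_eq_fderiv.symm.trans (HasLineDerivAt.lineDeriv h)

section ParametricIntegral

universe u

variable {E F : Type u} [NormedAddCommGroup E] [NormedSpace ℝ E] [ProperSpace E]
  [NormedAddCommGroup F] [NormedSpace ℝ F] {a b : ℝ} {G : E × ℝ → F}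

theorem hasFDerivAt_intervalIntegral_of_contDiff (hG : ContDiff ℝ 1 G) (x₀ : E) :
    HasFDerivAt (fun x => ∫ s in a..b, G (x, s))
      (∫ s in a..b, (fderiv ℝ G (x₀, s)).comp (ContinuousLinearMap.inl ℝ E ℝ)) x₀ := by
  have hslice (x : E) : Continuous fun s : ℝ => (x, s) := continuous_const.prodMk continuous_id
  have hG' : Continuous fun p => (fderiv ℝ G p).comp (ContinuousLinearMap.inl ℝ E ℝ) :=
    (hG.continuous_fderiv one_ne_zero).clm_comp continuous_const
  obtain ⟨M, hM⟩ := ((isCompact_closedBall x₀ 1).prod (isCompact_uIcc (a := a) (b := b))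
    ).exists_bound_of_continuousOn hG'.continuousOn
  refine intervalIntegral.hasFDerivAt_integral_of_dominated_of_fderiv_le (bound := fun _ => M)
    (Metric.ball_mem_nhds x₀ one_pos)
    (.of_forall fun x => (hG.continuous.comp (hslice x)).aestronglyMeasurable)
    ((hG.continuous.comp (hslice x₀)).intervalIntegrable a b)
    (hG'.comp (hslice x₀)).aestronglyMeasurable
    (ae_of_all _ fun s hs x hx =>
      hM (x, s) ⟨Metric.ball_subset_closedBall hx, Set.uIoc_subset_uIcc hs⟩)
    intervalIntegrable_const (ae_of_all _ fun s _ x _ => ?_)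
  exact ((hG.differentiable one_ne_zero (x, s)).hasFDerivAt).comp x (hasFDerivAt_prodMk_left x s)

theorem contDiff_intervalIntegral (n : ℕ) (hG : ContDiff ℝ n G) :
    ContDiff ℝ n fun x => ∫ s in a..b, G (x, s) := by
  induction n generalizing F with
  | zero =>
    rw [Nat.cast_zero, contDiff_zero] at hG ⊢
    exact intervalIntegral.continuous_parametric_intervalIntegral_of_continuous'
      (f := fun x s => G (x, s)) hG a b
  | succ n ih =>
    have hG1 : ContDiff ℝ 1 G := hG.of_le (by exact_mod_cast Nat.le_add_left 1 n)
    rw [Nat.cast_succ, contDiff_succ_iff_fderiv] at hG ⊢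
    refine ⟨fun x => (hasFDerivAt_intervalIntegral_of_contDiff hG1 x).differentiableAt,
      by simp, ?_⟩
    have hderiv : fderiv ℝ (fun x => ∫ s in a..b, G (x, s)) =
        fun x => ∫ s in a..b, (fderiv ℝ G (x, s)).comp (ContinuousLinearMap.inl ℝ E ℝ) :=
      funext fun x => (hasFDerivAt_intervalIntegral_of_contDiff hG1 x).fderiv
    rw [hderiv]
    exact ih (hG.2.2.clm_comp contDiff_const)

theorem fderiv_intervalIntegral_apply (hG : ContDiff ℝ 1 G) (x v : E) :
    fderiv ℝ (fun x => ∫ s in a..b, G (x, s)) x v = ∫ s in a..b, fderiv ℝ G (x, s) (v, 0) := by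
  rw [(hasFDerivAt_intervalIntegral_of_contDiff hG x).fderiv,
    ContinuousLinearMap.intervalIntegral_apply]
  · rfl
  · exact (((hG.continuous_fderiv one_ne_zero).clm_comp continuous_const).comp
      (continuous_const.prodMk continuous_id)).intervalIntegrable a b

end ParametricIntegral

section Primitive

variable {ι : Type} [DecidableEq ι]

theorem update_add_smul_single_self (x : ι → ℝ) (i : ι) (t c : ℝ) :
    update (x + t • Pi.single i 1) i c = update x i c := by
  ext k; rcases eq_or_ne k i with rfl | hk <;> simp [*]

theorem update_add_smul_single_of_ne {i j : ι} (hji : j ≠ i) (x : ι → ℝ) (t c : ℝ) :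
    update (x + t • Pi.single j 1) i c = update x i c + t • Pi.single j 1 := by
  ext k; rcases eq_or_ne k i with rfl | hk <;> simp [*, Pi.single_apply, hji.symm]

noncomputable def primitiveAlong (i : ι) (f : (ι → ℝ) → ℝ) (x : ι → ℝ) : ℝ :=
  ∫ t in (0 : ℝ)..x i, f (update x i t)

/-- After the substitution `t = x i * s` the primitive is an integral over the fixed interval
`[0, 1]`, which can be differentiated under the integral sign. -/
noncomputable def primitiveAlongIntegrand (i : ι) (f : (ι → ℝ) → ℝ) (p : (ι → ℝ) × ℝ) : ℝ :=
  p.1 i * f (update p.1 i (p.1 i * p.2))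

theorem primitiveAlong_eq_integral_unitInterval (i : ι) (f : (ι → ℝ) → ℝ) (x : ι → ℝ) :
    primitiveAlong i f x = ∫ s in (0 : ℝ)..1, primitiveAlongIntegrand i f (x, s) := by
  have hscale := intervalIntegral.mul_integral_comp_mul_left (a := 0) (b := 1)
    (f := fun τ => f (update x i τ)) (x i)
  simpa [primitiveAlong, primitiveAlongIntegrand, intervalIntegral.integral_const_mul] using
    hscale.symm

theorem primitiveAlong_add (i : ι) {f g : (ι → ℝ) → ℝ} (hf : Continuous f) (hg : Continuous g)
    (x : ι → ℝ) :
    primitiveAlong i (fun y => f y + g y) x = primitiveAlong i f x + primitiveAlong i g x :=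
  intervalIntegral.integral_add
    ((hf.comp (continuous_const.update i continuous_id)).intervalIntegrable _ _)
    ((hg.comp (continuous_const.update i continuous_id)).intervalIntegrable _ _)

theorem primitiveAlong_zero (i : ι) (x : ι → ℝ) : primitiveAlong i (fun _ => 0) x = 0 := by
  simp [primitiveAlong]

variable [Fintype ι]

theorem ContDiff.update {E : Type*} [NormedAddCommGroup E] [NormedSpace ℝ E]
    {n : WithTop ℕ∞} {φ : E → ι → ℝ} {c : E → ℝ} (hφ : ContDiff ℝ n φ) (hc : ContDiff ℝ n c)
    (i : ι) : ContDiff ℝ n fun y => update (φ y) i (c y) := by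
  refine contDiff_pi.2 fun k => ?_
  rcases eq_or_ne k i with rfl | hk
  · simpa using hc
  · simpa [hk] using contDiff_pi.1 hφ k

theorem hasDerivAt_comp_update {f : (ι → ℝ) → ℝ} (hf : Differentiable ℝ f) (x : ι → ℝ) (i : ι)
    (t : ℝ) :
    HasDerivAt (fun τ => f (update x i τ)) (fderiv ℝ f (update x i t) (Pi.single i 1)) t := by
  have hline (τ : ℝ) : update x i τ = update x i 0 + τ • Pi.single i 1 := by
    ext k; rcases eq_or_ne k i with rfl | hk <;> simp [*]
  have hline' : HasDerivAt (fun τ : ℝ => update x i 0 + τ • Pi.single i (1 : ℝ))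
      (Pi.single i 1) t := by
    simpa using ((hasDerivAt_id t).smul_const (Pi.single i (1 : ℝ))).const_add (update x i 0)
  rw [funext fun τ => congrArg f (hline τ), hline t]
  exact (hf _).hasFDerivAt.comp_hasDerivAt t hline'

theorem contDiff_primitiveAlongIntegrand {n : WithTop ℕ∞} (i : ι) {f : (ι → ℝ) → ℝ}
    (hf : ContDiff ℝ n f) : ContDiff ℝ n (primitiveAlongIntegrand i f) := by
  have hxi : ContDiff ℝ n fun p : (ι → ℝ) × ℝ => p.1 i := by fun_prop
  have hs : ContDiff ℝ n fun p : (ι → ℝ) × ℝ => p.2 := contDiff_snd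
  exact hxi.mul (hf.comp (contDiff_fst.update (hxi.mul hs) i))

theorem contDiff_primitiveAlong (n : ℕ) (i : ι) {f : (ι → ℝ) → ℝ} (hf : ContDiff ℝ n f) :
    ContDiff ℝ n (primitiveAlong i f) := by
  rw [funext (primitiveAlong_eq_integral_unitInterval i f)]
  exact contDiff_intervalIntegral n (contDiff_primitiveAlongIntegrand i hf)

theorem fderiv_primitiveAlong_self (i : ι) {f : (ι → ℝ) → ℝ} (hf : ContDiff ℝ 1 f)
    (x : ι → ℝ) : fderiv ℝ (primitiveAlong i f) x (Pi.single i 1) = f x := by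
  refine fderiv_apply_eq_of_hasDerivAt_line
    ((contDiff_primitiveAlong 1 i hf).differentiable one_ne_zero x) ?_
  have hcont : Continuous fun τ => f (update x i τ) :=
    hf.continuous.comp (continuous_const.update i continuous_id)
  have hint := (hcont.integral_hasStrictDerivAt 0 (x i + 0)).hasDerivAt
  simp only [primitiveAlong, update_add_smul_single_self, Pi.add_apply, Pi.smul_apply,
    Pi.single_eq_same, smul_eq_mul, mul_one]
  refine (hint.comp 0 ((hasDerivAt_id (0 : ℝ)).const_add (x i))).congr_deriv ?_
  simp

theorem fderiv_primitiveAlong_of_ne {i j : ι} (hji : j ≠ i) {f : (ι → ℝ) → ℝ}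
    (hf : ContDiff ℝ 1 f) (x : ι → ℝ) :
    fderiv ℝ (primitiveAlong i f) x (Pi.single j 1) =
      primitiveAlong i (fun y => fderiv ℝ f y (Pi.single j 1)) x := by
  rw [funext (primitiveAlong_eq_integral_unitInterval i f),
    fderiv_intervalIntegral_apply (contDiff_primitiveAlongIntegrand i hf),
    primitiveAlong_eq_integral_unitInterval]
  refine intervalIntegral.integral_congr fun s _ => fderiv_apply_eq_of_hasDerivAt_line
    ((contDiff_primitiveAlongIntegrand i hf).differentiable one_ne_zero _) ?_
  have hline : HasDerivAt (fun t : ℝ => update x i (x i * s) + t • Pi.single j (1 : ℝ))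
      (Pi.single j (1 : ℝ)) 0 := by
    simpa using ((hasDerivAt_id (0 : ℝ)).smul_const (Pi.single j 1 : ι → ℝ)).const_add
      (update x i (x i * s))
  have := ((hf.differentiable one_ne_zero _).hasFDerivAt.comp_hasDerivAt 0 hline).const_mul (x i)
  simpa [primitiveAlongIntegrand, update_add_smul_single_of_ne hji, Pi.single_apply, hji.symm]
    using this

theorem primitiveAlong_fderiv_self (i : ι) {f : (ι → ℝ) → ℝ} (hf : ContDiff ℝ 1 f)
    (x : ι → ℝ) :
    primitiveAlong i (fun y => fderiv ℝ f y (Pi.single i 1)) x = f x - f (update x i 0) := by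
  have hderiv := hasDerivAt_comp_update (hf.differentiable one_ne_zero) x i
  rw [primitiveAlong, intervalIntegral.integral_eq_sub_of_hasDerivAt (fun t _ => hderiv t),
    update_eq_self]
  exact (((hf.continuous_fderiv one_ne_zero).clm_apply continuous_const).comp
    (continuous_const.update i continuous_id)).intervalIntegrable _ _

theorem fderiv_comp_update_zero_self (i : ι) (g : (ι → ℝ) → ℝ) (x : ι → ℝ) :
    fderiv ℝ (fun y => g (update y i 0)) x (Pi.single i 1) = 0 := by
  by_cases hg : DifferentiableAt ℝ (fun y => g (update y i 0)) x
  · refine fderiv_apply_eq_of_hasDerivAt_line hg ?_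
    simpa [update_add_smul_single_self] using hasDerivAt_const (0 : ℝ) (g (update x i 0))
  · simp [fderiv_zero_of_not_differentiableAt hg]

theorem fderiv_sub_primitiveAlong_self (i : ι) {g f : (ι → ℝ) → ℝ} (hg : ContDiff ℝ 1 g)
    (hf : ContDiff ℝ 1 f) (x : ι → ℝ) :
    fderiv ℝ (fun y => g y - primitiveAlong i f y) x (Pi.single i 1) =
      fderiv ℝ g x (Pi.single i 1) - f x := by
  rw [fderiv_fun_sub (hg.differentiable one_ne_zero x)
    ((contDiff_primitiveAlong 1 i hf).differentiable one_ne_zero x),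
    sub_apply, fderiv_primitiveAlong_self i hf]

end Primitive

theorem contDiff_pd {m n : WithTop ℕ∞} (j : Fin 3) {f : (Fin 3 → ℝ) → ℝ} (hf : ContDiff ℝ n f)
    (hmn : m + 1 ≤ n) : ContDiff ℝ m (pd j f) :=
  (hf.fderiv_right hmn).clm_apply contDiff_const

section OffDiagonal

variable {a b c : (Fin 3 → ℝ) → ℝ}

noncomputable def mixedPartialTarget (a b c : (Fin 3 → ℝ) → ℝ) (x : Fin 3 → ℝ) : ℝ :=
  (pd 2 a x + pd 1 b x - pd 0 c x) / 2

noncomputable def offDiagPotential (a b c : (Fin 3 → ℝ) → ℝ) : Fin 3 → (Fin 3 → ℝ) → ℝ :=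
  ![primitiveAlong 1 (primitiveAlong 2 (mixedPartialTarget a b c)),
    fun x => primitiveAlong 0 (fun y => a y - primitiveAlong 2 (mixedPartialTarget a b c) y) x
      + primitiveAlong 2 (fun y => c (update y 0 0)) x,
    primitiveAlong 0 (fun y => b y - primitiveAlong 1 (mixedPartialTarget a b c) y)]

theorem contDiff_mixedPartialTarget (ha : ContDiff ℝ 3 a) (hb : ContDiff ℝ 3 b)
    (hc : ContDiff ℝ 3 c) : ContDiff ℝ 2 (mixedPartialTarget a b c) :=
  (((contDiff_pd 2 ha (by norm_num)).add (contDiff_pd 1 hb (by norm_num))).sub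
    (contDiff_pd 0 hc (by norm_num))).div_const 2

theorem contDiff_offDiagPotential (ha : ContDiff ℝ 3 a) (hb : ContDiff ℝ 3 b)
    (hc : ContDiff ℝ 3 c) (i : Fin 3) : ContDiff ℝ 2 (offDiagPotential a b c i) := by
  have hP (k : Fin 3) {f : (Fin 3 → ℝ) → ℝ} (hf : ContDiff ℝ 2 f) :
      ContDiff ℝ 2 (primitiveAlong k f) := contDiff_primitiveAlong 2 k hf
  have hw := contDiff_mixedPartialTarget ha hb hc
  have hz : ContDiff ℝ 2 fun y : Fin 3 → ℝ => c (update y 0 0) :=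
    (hc.of_le (by norm_num)).comp (contDiff_id.update contDiff_const 0)
  fin_cases i
  · exact hP 1 (hP 2 hw)
  · exact (hP 0 ((ha.of_le (by norm_num)).sub (hP 2 hw))).add (hP 2 hz)
  · exact hP 0 ((hb.of_le (by norm_num)).sub (hP 1 hw))

theorem offDiagPotential_symmGrad_01 (ha : ContDiff ℝ 3 a) (hb : ContDiff ℝ 3 b)
    (hc : ContDiff ℝ 3 c) (x : Fin 3 → ℝ) :
    pd 0 (offDiagPotential a b c 1) x + pd 1 (offDiagPotential a b c 0) x = a x := by
  have hw := contDiff_mixedPartialTarget ha hb hc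
  have hw₂ := contDiff_primitiveAlong 2 2 hw
  have hz : ContDiff ℝ 2 fun y : Fin 3 → ℝ => c (update y 0 0) :=
    (hc.of_le (by norm_num)).comp (contDiff_id.update contDiff_const 0)
  have hd : ContDiff ℝ 2 fun y => a y - primitiveAlong 2 (mixedPartialTarget a b c) y :=
    (ha.of_le (by norm_num)).sub hw₂
  simp only [offDiagPotential, pd, Matrix.cons_val_zero, Matrix.cons_val_one]
  rw [fderiv_fun_add ((contDiff_primitiveAlong 2 0 hd).differentiable two_ne_zero x)
      ((contDiff_primitiveAlong 2 2 hz).differentiable two_ne_zero x), add_apply,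
    fderiv_primitiveAlong_self 0 (hd.of_le one_le_two),
    fderiv_primitiveAlong_of_ne (by decide) (hz.of_le one_le_two),
    fderiv_primitiveAlong_self 1 (hw₂.of_le one_le_two)]
  simp only [fderiv_comp_update_zero_self, primitiveAlong_zero]
  ring

theorem offDiagPotential_symmGrad_02 (ha : ContDiff ℝ 3 a) (hb : ContDiff ℝ 3 b)
    (hc : ContDiff ℝ 3 c) (x : Fin 3 → ℝ) :
    pd 0 (offDiagPotential a b c 2) x + pd 2 (offDiagPotential a b c 0) x = b x := by
  have hw := contDiff_mixedPartialTarget ha hb hc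
  have hw₁ := contDiff_primitiveAlong 2 1 hw
  have hw₂ := contDiff_primitiveAlong 2 2 hw
  have hd : ContDiff ℝ 2 fun y => b y - primitiveAlong 1 (mixedPartialTarget a b c) y :=
    (hb.of_le (by norm_num)).sub hw₁
  simp only [offDiagPotential, pd, Matrix.cons_val_zero, Matrix.cons_val_two, Matrix.tail_cons,
    Matrix.head_cons]
  rw [fderiv_primitiveAlong_self 0 (hd.of_le one_le_two),
    fderiv_primitiveAlong_of_ne (by decide) (hw₂.of_le one_le_two)]
  simp only [fderiv_primitiveAlong_self 2 (hw.of_le one_le_two)]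
  ring

theorem offDiagPotential_symmGrad_12 (ha : ContDiff ℝ 3 a) (hb : ContDiff ℝ 3 b)
    (hc : ContDiff ℝ 3 c) (x : Fin 3 → ℝ) :
    pd 1 (offDiagPotential a b c 2) x + pd 2 (offDiagPotential a b c 1) x = c x := by
  have hw := contDiff_mixedPartialTarget ha hb hc
  have hw₁ := contDiff_primitiveAlong 2 1 hw
  have hw₂ := contDiff_primitiveAlong 2 2 hw
  have hz : ContDiff ℝ 2 fun y : Fin 3 → ℝ => c (update y 0 0) :=
    (hc.of_le (by norm_num)).comp (contDiff_id.update contDiff_const 0)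
  have hda : ContDiff ℝ 2 fun y => a y - primitiveAlong 2 (mixedPartialTarget a b c) y :=
    (ha.of_le (by norm_num)).sub hw₂
  have hdb : ContDiff ℝ 2 fun y => b y - primitiveAlong 1 (mixedPartialTarget a b c) y :=
    (hb.of_le (by norm_num)).sub hw₁
  simp only [offDiagPotential, pd, Matrix.cons_val_zero, Matrix.cons_val_one, Matrix.cons_val_two,
    Matrix.tail_cons, Matrix.head_cons]
  rw [fderiv_primitiveAlong_of_ne (by decide) (hdb.of_le one_le_two),
    fderiv_fun_add ((contDiff_primitiveAlong 2 0 hda).differentiable two_ne_zero x)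
      ((contDiff_primitiveAlong 2 2 hz).differentiable two_ne_zero x), add_apply,
    fderiv_primitiveAlong_of_ne (by decide) (hda.of_le one_le_two),
    fderiv_primitiveAlong_self 2 (hz.of_le one_le_two)]
  simp only [fderiv_sub_primitiveAlong_self 1 (hb.of_le (by norm_num)) (hw.of_le one_le_two),
    fderiv_sub_primitiveAlong_self 2 (ha.of_le (by norm_num)) (hw.of_le one_le_two)]
  have hcb : Continuous fun y => fderiv ℝ b y (Pi.single 1 1) - mixedPartialTarget a b c y :=
    (contDiff_pd (m := 0) 1 hb (by norm_num)).continuous.sub hw.continuous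
  have hca : Continuous fun y => fderiv ℝ a y (Pi.single 2 1) - mixedPartialTarget a b c y :=
    (contDiff_pd (m := 0) 2 ha (by norm_num)).continuous.sub hw.continuous
  rw [← add_assoc, ← primitiveAlong_add 0 hcb hca]
  have hsum (y : Fin 3 → ℝ) : fderiv ℝ b y (Pi.single 1 1) - mixedPartialTarget a b c y +
      (fderiv ℝ a y (Pi.single 2 1) - mixedPartialTarget a b c y) =
        fderiv ℝ c y (Pi.single 0 1) := by
    simp only [mixedPartialTarget, pd]; ring
  simp only [hsum, primitiveAlong_fderiv_self 0 (hc.of_le (by norm_num))]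
  ring

end OffDiagonal

theorem stmt13 (ε12 ε13 ε23 : (Fin 3 → ℝ) → ℝ)
    (h12 : ContDiff ℝ 3 ε12) (h13 : ContDiff ℝ 3 ε13) (h23 : ContDiff ℝ 3 ε23) :
    ∃ u : Fin 3 → (Fin 3 → ℝ) → ℝ,
      (∀ i, ContDiff ℝ 2 (u i)) ∧
      (∀ x, pd 0 (u 1) x + pd 1 (u 0) x = 2 * ε12 x) ∧
      (∀ x, pd 0 (u 2) x + pd 2 (u 0) x = 2 * ε13 x) ∧
      (∀ x, pd 1 (u 2) x + pd 2 (u 1) x = 2 * ε23 x) := by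
  have hdouble {f : (Fin 3 → ℝ) → ℝ} (hf : ContDiff ℝ 3 f) : ContDiff ℝ 3 fun x => 2 * f x :=
    contDiff_const.mul hf
  have ha := hdouble h12
  have hb := hdouble h13
  have hc := hdouble h23
  exact ⟨offDiagPotential _ _ _, contDiff_offDiagPotential ha hb hc,
    offDiagPotential_symmGrad_01 ha hb hc, offDiagPotential_symmGrad_02 ha hb hc,
    offDiagPotential_symmGrad_12 ha hb hc⟩
end
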